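/- Let g be the 6-dimensional real Lie algebra with basis X, Y, Z, V₁, V₂, V₃ and brackets [X,Y]=Z, [Z,X]=Y, [Y,Z]=X, [X,V₁]=−V₂, [Z,V₃]=−V₂, [X,V₂]=V₁, [Y,V₃]=V₁, [Z,V₂]=V₃, [Y,V₁]=−V₃, and [X,V₃]=[Y,V₂]=[Z,V₁]=[V₁,V₂]=[V₁,V₃]=[V₂,V₃]=0, and let h = span{X, Y, Z}. For a ∈ ℝ set m_a = span{V₁ + aZ, V₂ + aY, V₃ − aX}. Then: (1) every linear subspace m of g with g = h ⊕ m as vector spaces and [h, m] ⊆ m equals m_a for some a ∈ ℝ; and (2) for each a ∈ ℝ, the subspace m_a satisfies g = h ⊕ m_a and [h, m_a] ⊆ m_a, and m_a generates g as a Lie algebra if and only if a ≠ 0. -/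

import Mathlib

/-!
If `m` is a complement of `h = span {X, Y, Z}`, write `Vᵢ + kᵢ ∈ m` with `kᵢ ∈ h`. Bracketing with
`h` and using `h ⊓ m = ⊥` forces the `kᵢ` to be `h`-equivariant: `⁅Z, V₁ + k₁⁆ = ⁅Z, k₁⁆ ∈ h ⊓ m`
vanishes, so `k₁` lies in the centraliser `K Z` of `Z` in `so₃`, and likewise `k₂ ∈ K Y`,
`k₃ ∈ K X`; two further brackets tie the three multiples to a single `a`, giving `m_a ≤ m`, and
equality follows since `m_a` is itself a complement of `h`.

For `a ≠ 0`, the brackets `⁅V₁ + a Z, V₂ + a Y⁆ ≡ a² X` and `⁅V₁ + a Z, V₃ - a X⁆ ≡ a² Y`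
modulo `m_a` put `h` inside the Lie algebra generated by `m_a`; for `a = 0`, `m_0` is an abelian
subalgebra of dimension `3 < 6`.
-/

open Module Submodule

section General

variable {R M : Type*} [CommRing R] [AddCommGroup M] [Module R M]

theorem LinearIndependent.eq_zero_of_triple {x y z : M} (h : LinearIndependent R ![x, y, z])
    {s t u : R} (h' : s • x + t • y + u • z = 0) : s = 0 ∧ t = 0 ∧ u = 0 := by
  have := Fintype.linearIndependent_iff.mp h ![s, t, u] (by simpa [Fin.sum_univ_three] using h')
  exact ⟨this 0, this 1, this 2⟩

theorem Submodule.exists_add_mem_of_sup_eq_top {p q : Submodule R M} (h : p ⊔ q = ⊤) (v : M) :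
    ∃ k ∈ p, v + k ∈ q := by
  obtain ⟨k, u, hk, hu, hku⟩ := codisjoint_iff_exists_add_eq.mp (codisjoint_iff.mpr h) v
  exact ⟨-k, neg_mem hk, by rwa [← hku, add_neg_cancel_comm]⟩

theorem lie_mem_of_mem_span_of_mem_span {L : Type*} [LieRing L] [LieAlgebra R L]
    {s t : Set L} {N : Submodule R L} (hst : ∀ x ∈ s, ∀ y ∈ t, ⁅x, y⁆ ∈ N)
    {x y : L} (hx : x ∈ span R s) (hy : y ∈ span R t) : ⁅x, y⁆ ∈ N := by
  induction hx, hy using span_induction₂ with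
  | mem_mem x y hx hy => exact hst x hx y hy
  | zero_left y hy => simp
  | zero_right x hx => simp
  | add_left x y z _ _ _ hx hy => simpa using add_mem hx hy
  | add_right x y z _ _ _ hx hy => simpa using add_mem hx hy
  | smul_left r x y _ _ h => simpa using N.smul_mem r h
  | smul_right r x y _ _ h => simpa using N.smul_mem r h

end General

theorem Matrix.range_cons_cons_cons_empty {α : Type*} (x y z : α) (u : Fin 0 → α) :
    Set.range (Matrix.vecCons x (Matrix.vecCons y (Matrix.vecCons z u))) = {x, y, z} := by
  rw [Matrix.range_cons, Matrix.range_cons_cons_empty, Set.singleton_union]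

section FiniteDimensional

variable {K V : Type*} [Field K] [AddCommGroup V] [Module K V]

theorem finrank_span_triple_le (x y z : V) : finrank K (span K ({x, y, z} : Set V)) ≤ 3 := by
  rw [← Matrix.range_cons_cons_cons_empty x y z ![]]
  exact (finrank_range_le_card ![x, y, z]).trans_eq (Fintype.card_fin 3)

theorem finrank_span_triple_eq {x y z : V} (h : LinearIndependent K ![x, y, z]) :
    finrank K (span K ({x, y, z} : Set V)) = 3 := by
  rw [← Matrix.range_cons_cons_cons_empty x y z ![], finrank_span_eq_card h, Fintype.card_fin]

theorem Submodule.inf_eq_bot_of_sup_eq_top [FiniteDimensional K V] {s t : Submodule K V}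
    (hsup : s ⊔ t = ⊤) (hdim : finrank K s + finrank K t ≤ finrank K V) : s ⊓ t = ⊥ := by
  have := finrank_sup_add_finrank_inf_eq s t
  rw [hsup, finrank_top] at this
  exact finrank_eq_zero.mp (by omega)

end FiniteDimensional

section SO3

variable (K : Type*) [Field K] {L : Type*} [LieRing L] [LieAlgebra K L]

structure IsSO3Triple (X Y Z : L) : Prop where
  linearIndependent : LinearIndependent K ![X, Y, Z]
  lie_X_Y : ⁅X, Y⁆ = Z
  lie_Y_Z : ⁅Y, Z⁆ = X
  lie_Z_X : ⁅Z, X⁆ = Y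

namespace IsSO3Triple

variable {K} {X Y Z : L}

theorem rotate (T : IsSO3Triple K X Y Z) : IsSO3Triple K Y Z X where
  linearIndependent := by
    convert T.linearIndependent.comp (finRotate 3) (finRotate 3).injective using 1
    ext i; fin_cases i <;> rfl
  lie_X_Y := T.lie_Y_Z
  lie_Y_Z := T.lie_Z_X
  lie_Z_X := T.lie_X_Y

theorem lie_Y_X (T : IsSO3Triple K X Y Z) : ⁅Y, X⁆ = -Z := by rw [← lie_skew, T.lie_X_Y]
theorem lie_Z_Y (T : IsSO3Triple K X Y Z) : ⁅Z, Y⁆ = -X := by rw [← lie_skew, T.lie_Y_Z]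
theorem lie_X_Z (T : IsSO3Triple K X Y Z) : ⁅X, Z⁆ = -Y := by rw [← lie_skew, T.lie_Z_X]

theorem lie_mem_span (T : IsSO3Triple K X Y Z) {x y : L} (hx : x ∈ span K {X, Y, Z})
    (hy : y ∈ span K {X, Y, Z}) : ⁅x, y⁆ ∈ span K {X, Y, Z} := by
  refine lie_mem_of_mem_span_of_mem_span ?_ hx hy
  simp only [Set.mem_insert_iff, Set.mem_singleton_iff]
  rintro x (rfl | rfl | rfl) y (rfl | rfl | rfl) <;>
    simp [T.lie_X_Y, T.lie_Y_Z, T.lie_Z_X, T.lie_Y_X, T.lie_Z_Y, T.lie_X_Z, mem_span_of_mem]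

theorem exists_eq_smul_of_lie_eq_zero (T : IsSO3Triple K X Y Z) {k : L}
    (hk : k ∈ span K {X, Y, Z}) (hZk : ⁅Z, k⁆ = 0) : ∃ c : K, k = c • Z := by
  obtain ⟨a, b, c, rfl⟩ := mem_span_triple.mp hk
  have hcoord : (-b) • X + a • Y + (0 : K) • Z = 0 := by
    rw [← hZk]
    simp only [lie_add, lie_smul, T.lie_Z_X, T.lie_Z_Y, lie_self]
    module
  obtain ⟨hb, ha, -⟩ := T.linearIndependent.eq_zero_of_triple hcoord
  exact ⟨c, by simp [ha, neg_eq_zero.mp hb]⟩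

end IsSO3Triple

end SO3

section EuclideanMotion

variable (K : Type*) [Field K] {L : Type*} [LieRing L] [LieAlgebra K L]

structure IsEuclideanMotionBasis (X Y Z V1 V2 V3 : L) : Prop where
  linearIndependent : LinearIndependent K ![X, Y, Z, V1, V2, V3]
  span_eq_top : span K {X, Y, Z, V1, V2, V3} = ⊤
  lie_X_Y : ⁅X, Y⁆ = Z
  lie_Y_Z : ⁅Y, Z⁆ = X
  lie_Z_X : ⁅Z, X⁆ = Y
  lie_X_V1 : ⁅X, V1⁆ = -V2
  lie_X_V2 : ⁅X, V2⁆ = V1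
  lie_X_V3 : ⁅X, V3⁆ = 0
  lie_Y_V1 : ⁅Y, V1⁆ = -V3
  lie_Y_V2 : ⁅Y, V2⁆ = 0
  lie_Y_V3 : ⁅Y, V3⁆ = V1
  lie_Z_V1 : ⁅Z, V1⁆ = 0
  lie_Z_V2 : ⁅Z, V2⁆ = V3
  lie_Z_V3 : ⁅Z, V3⁆ = -V2
  lie_V1_V2 : ⁅V1, V2⁆ = 0
  lie_V1_V3 : ⁅V1, V3⁆ = 0
  lie_V2_V3 : ⁅V2, V3⁆ = 0

namespace IsEuclideanMotionBasis

variable {K} {X Y Z V1 V2 V3 : L}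

theorem so3 (E : IsEuclideanMotionBasis K X Y Z V1 V2 V3) : IsSO3Triple K X Y Z where
  linearIndependent := by
    convert E.linearIndependent.comp _ (Fin.castLE_injective (show 3 ≤ 6 by norm_num)) using 1
    ext i; fin_cases i <;> rfl
  lie_X_Y := E.lie_X_Y
  lie_Y_Z := E.lie_Y_Z
  lie_Z_X := E.lie_Z_X

theorem finrank_eq_six (E : IsEuclideanMotionBasis K X Y Z V1 V2 V3) : finrank K L = 6 := by
  have hrange : Set.range ![X, Y, Z, V1, V2, V3] = {X, Y, Z, V1, V2, V3} := by
    simp only [Matrix.range_cons, Matrix.range_empty, Set.union_empty, Set.singleton_union]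
  rw [← finrank_top, ← E.span_eq_top, ← hrange, finrank_span_eq_card E.linearIndependent,
    Fintype.card_fin]

theorem finiteDimensional (E : IsEuclideanMotionBasis K X Y Z V1 V2 V3) :
    FiniteDimensional K L :=
  Module.finite_of_finrank_eq_succ E.finrank_eq_six

theorem sup_span_eq_top (E : IsEuclideanMotionBasis K X Y Z V1 V2 V3) (a : K) :
    span K {X, Y, Z} ⊔ span K {V1 + a • Z, V2 + a • Y, V3 - a • X} = ⊤ := by
  set S := span K {X, Y, Z} ⊔ span K {V1 + a • Z, V2 + a • Y, V3 - a • X}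
  have hh : ∀ x ∈ ({X, Y, Z} : Set L), x ∈ S := fun x hx ↦ mem_sup_left (subset_span hx)
  have hm : ∀ x ∈ ({V1 + a • Z, V2 + a • Y, V3 - a • X} : Set L), x ∈ S :=
    fun x hx ↦ mem_sup_right (subset_span hx)
  rw [eq_top_iff, ← E.span_eq_top, span_le]
  simp only [Set.insert_subset_iff, Set.singleton_subset_iff, SetLike.mem_coe]
  refine ⟨hh X (by simp), hh Y (by simp), hh Z (by simp), ?_, ?_, ?_⟩
  · simpa using sub_mem (hm (V1 + a • Z) (by simp)) (S.smul_mem a (hh Z (by simp)))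
  · simpa using sub_mem (hm (V2 + a • Y) (by simp)) (S.smul_mem a (hh Y (by simp)))
  · simpa using add_mem (hm (V3 - a • X) (by simp)) (S.smul_mem a (hh X (by simp)))

theorem inf_span_eq_bot (E : IsEuclideanMotionBasis K X Y Z V1 V2 V3) (a : K) :
    span K {X, Y, Z} ⊓ span K {V1 + a • Z, V2 + a • Y, V3 - a • X} = ⊥ := by
  have := E.finiteDimensional
  refine inf_eq_bot_of_sup_eq_top (E.sup_span_eq_top a) ?_
  rw [finrank_span_triple_eq E.so3.linearIndependent, E.finrank_eq_six]
  linarith [finrank_span_triple_le (K := K) (V1 + a • Z) (V2 + a • Y) (V3 - a • X)]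

theorem lie_mem_span (E : IsEuclideanMotionBasis K X Y Z V1 V2 V3) (a : K) {x y : L}
    (hx : x ∈ span K {X, Y, Z}) (hy : y ∈ span K {V1 + a • Z, V2 + a • Y, V3 - a • X}) :
    ⁅x, y⁆ ∈ span K {V1 + a • Z, V2 + a • Y, V3 - a • X} := by
  refine lie_mem_of_mem_span_of_mem_span ?_ hx hy
  simp only [Set.mem_insert_iff, Set.mem_singleton_iff]
  rintro x (rfl | rfl | rfl) y (rfl | rfl | rfl) <;>
    simp only [lie_add, lie_sub, lie_smul, lie_self, E.lie_X_V1, E.lie_X_V2, E.lie_X_V3,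
      E.lie_Y_V1, E.lie_Y_V2, E.lie_Y_V3, E.lie_Z_V1, E.lie_Z_V2, E.lie_Z_V3, E.lie_X_Y,
      E.so3.lie_X_Z, E.lie_Y_Z, E.so3.lie_Y_X, E.lie_Z_X, E.so3.lie_Z_Y] <;>
    rw [mem_span_triple]
  -- `h` acts on `m_a` by the same matrices as on `span {V1, V2, V3}`, whatever `a` is.
  · exact ⟨0, -1, 0, by module⟩
  · exact ⟨1, 0, 0, by module⟩
  · exact ⟨0, 0, 0, by module⟩
  · exact ⟨0, 0, -1, by module⟩
  · exact ⟨0, 0, 0, by module⟩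
  · exact ⟨1, 0, 0, by module⟩
  · exact ⟨0, 0, 0, by module⟩
  · exact ⟨0, 0, 1, by module⟩
  · exact ⟨0, -1, 0, by module⟩

theorem lieSpan_eq_top (E : IsEuclideanMotionBasis K X Y Z V1 V2 V3) {a : K} (ha : a ≠ 0) :
    (LieSubalgebra.lieSpan K L ({V1 + a • Z, V2 + a • Y, V3 - a • X} : Set L)).toSubmodule =
      ⊤ := by
  set S := LieSubalgebra.lieSpan K L ({V1 + a • Z, V2 + a • Y, V3 - a • X} : Set L)
  have hw1 : V1 + a • Z ∈ S := LieSubalgebra.subset_lieSpan (by simp)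
  have hw2 : V2 + a • Y ∈ S := LieSubalgebra.subset_lieSpan (by simp)
  have hw3 : V3 - a • X ∈ S := LieSubalgebra.subset_lieSpan (by simp)
  have hV1X : ⁅V1, X⁆ = V2 := by rw [← lie_skew, E.lie_X_V1, neg_neg]
  have hV1Y : ⁅V1, Y⁆ = V3 := by rw [← lie_skew, E.lie_Y_V1, neg_neg]
  have hX : X ∈ S := by
    have h : (a * a) • X = ⁅V1 + a • Z, V2 + a • Y⁆ - (2 * a) • (V3 - a • X) := by
      simp only [add_lie, lie_add, lie_smul, smul_lie, E.lie_V1_V2, hV1Y, E.lie_Z_V2,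
        E.so3.lie_Z_Y]
      module
    rw [← S.mem_toSubmodule, ← smul_mem_iff _ (mul_ne_zero ha ha), h]
    exact sub_mem (S.lie_mem hw1 hw2) (S.smul_mem _ hw3)
  have hY : Y ∈ S := by
    have h : (a * a) • Y = ⁅V1 + a • Z, V3 - a • X⁆ + (2 * a) • (V2 + a • Y) := by
      simp only [add_lie, lie_sub, lie_smul, smul_lie, E.lie_V1_V3, hV1X, E.lie_Z_V3,
        E.lie_Z_X]
      module
    rw [← S.mem_toSubmodule, ← smul_mem_iff _ (mul_ne_zero ha ha), h]
    exact add_mem (S.lie_mem hw1 hw3) (S.smul_mem _ hw2)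
  have hZ : Z ∈ S := E.lie_X_Y ▸ S.lie_mem hX hY
  rw [eq_top_iff, ← E.sup_span_eq_top a, sup_le_iff, span_le, span_le]
  simp only [Set.insert_subset_iff, Set.singleton_subset_iff, SetLike.mem_coe,
    LieSubalgebra.mem_toSubmodule]
  exact ⟨⟨hX, hY, hZ⟩, hw1, hw2, hw3⟩

theorem lieSpan_ne_top (E : IsEuclideanMotionBasis K X Y Z V1 V2 V3) :
    (LieSubalgebra.lieSpan K L ({V1, V2, V3} : Set L)).toSubmodule ≠ ⊤ := by
  have hcomm : ∀ x ∈ ({V1, V2, V3} : Set L), ∀ y ∈ ({V1, V2, V3} : Set L), ⁅x, y⁆ = 0 := by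
    have hV2V1 : ⁅V2, V1⁆ = 0 := by rw [← lie_skew, E.lie_V1_V2, neg_zero]
    have hV3V1 : ⁅V3, V1⁆ = 0 := by rw [← lie_skew, E.lie_V1_V3, neg_zero]
    have hV3V2 : ⁅V3, V2⁆ = 0 := by rw [← lie_skew, E.lie_V2_V3, neg_zero]
    simp only [Set.mem_insert_iff, Set.mem_singleton_iff]
    rintro x (rfl | rfl | rfl) y (rfl | rfl | rfl) <;>
      simp only [lie_self, E.lie_V1_V2, E.lie_V1_V3, E.lie_V2_V3, hV2V1, hV3V1, hV3V2]
  rw [LieSubalgebra.coe_lieSpan_eq_span_of_forall_lie_eq_zero hcomm]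
  intro htop
  have := finrank_span_triple_le (K := K) V1 V2 V3
  rw [htop, finrank_top, E.finrank_eq_six] at this
  omega

theorem lieSpan_eq_top_iff (E : IsEuclideanMotionBasis K X Y Z V1 V2 V3) (a : K) :
    (LieSubalgebra.lieSpan K L ({V1 + a • Z, V2 + a • Y, V3 - a • X} : Set L)).toSubmodule = ⊤ ↔
      a ≠ 0 := by
  refine ⟨?_, E.lieSpan_eq_top⟩
  rintro htop rfl
  simp only [zero_smul, add_zero, sub_zero] at htop
  exact E.lieSpan_ne_top htop

theorem exists_span_le_of_lie_mem (E : IsEuclideanMotionBasis K X Y Z V1 V2 V3)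
    {m : Submodule K L} (hsup : span K {X, Y, Z} ⊔ m = ⊤) (hdisj : Disjoint (span K {X, Y, Z}) m)
    (hm : ∀ x ∈ span K {X, Y, Z}, ∀ y ∈ m, ⁅x, y⁆ ∈ m) :
    ∃ a : K, span K {V1 + a • Z, V2 + a • Y, V3 - a • X} ≤ m := by
  have hvanish : ∀ x ∈ span K {X, Y, Z}, x ∈ m → x = 0 := disjoint_def.mp hdisj
  have hX : X ∈ span K {X, Y, Z} := mem_span_of_mem (by simp)
  have hY : Y ∈ span K {X, Y, Z} := mem_span_of_mem (by simp)
  have hZ : Z ∈ span K {X, Y, Z} := mem_span_of_mem (by simp)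
  have hYZX : ({Y, Z, X} : Set L) = {X, Y, Z} := by
    ext; simp only [Set.mem_insert_iff, Set.mem_singleton_iff]; tauto
  have hZXY : ({Z, X, Y} : Set L) = {X, Y, Z} := by
    ext; simp only [Set.mem_insert_iff, Set.mem_singleton_iff]; tauto
  obtain ⟨k1, hk1, hu1⟩ := exists_add_mem_of_sup_eq_top hsup V1
  obtain ⟨k2, hk2, hu2⟩ := exists_add_mem_of_sup_eq_top hsup V2
  obtain ⟨k3, hk3, hu3⟩ := exists_add_mem_of_sup_eq_top hsup V3
  obtain ⟨a, rfl⟩ : ∃ a : K, k1 = a • Z := by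
    refine E.so3.exists_eq_smul_of_lie_eq_zero hk1 (hvanish _ (E.so3.lie_mem_span hZ hk1) ?_)
    simpa [E.lie_Z_V1] using hm Z hZ _ hu1
  obtain ⟨b, rfl⟩ : ∃ b : K, k2 = b • Y := by
    refine E.so3.rotate.rotate.exists_eq_smul_of_lie_eq_zero (by rwa [hZXY])
      (hvanish _ (E.so3.lie_mem_span hY hk2) ?_)
    simpa [E.lie_Y_V2] using hm Y hY _ hu2
  obtain ⟨c, rfl⟩ : ∃ c : K, k3 = c • X := by
    refine E.so3.rotate.exists_eq_smul_of_lie_eq_zero (by rwa [hYZX])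
      (hvanish _ (E.so3.lie_mem_span hX hk3) ?_)
    simpa [E.lie_X_V3] using hm X hX _ hu3
  have hba : b = a := by
    have h : ⁅X, V1 + a • Z⁆ + (V2 + b • Y) = (b - a) • Y := by
      simp only [lie_add, lie_smul, E.lie_X_V1, E.so3.lie_X_Z]
      module
    have h0 := hvanish _ (smul_mem _ _ hY) (h ▸ add_mem (hm X hX _ hu1) hu2)
    exact sub_eq_zero.mp ((smul_eq_zero_iff_left (E.so3.linearIndependent.ne_zero 1)).mp h0)
  have hca : c = -a := by
    have h : ⁅Y, V1 + a • Z⁆ + (V3 + c • X) = (c - -a) • X := by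
      simp only [lie_add, lie_smul, E.lie_Y_V1, E.lie_Y_Z]
      module
    have h0 := hvanish _ (smul_mem _ _ hX) (h ▸ add_mem (hm Y hY _ hu1) hu3)
    exact sub_eq_zero.mp ((smul_eq_zero_iff_left (E.so3.linearIndependent.ne_zero 0)).mp h0)
  rw [hba] at hu2
  rw [hca, neg_smul, ← sub_eq_add_neg] at hu3
  refine ⟨a, span_le.mpr ?_⟩
  simp only [Set.insert_subset_iff, Set.singleton_subset_iff, SetLike.mem_coe]
  exact ⟨hu1, hu2, hu3⟩

theorem exists_eq_span_of_lie_mem (E : IsEuclideanMotionBasis K X Y Z V1 V2 V3)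
    {m : Submodule K L} (hsup : span K {X, Y, Z} ⊔ m = ⊤) (hinf : span K {X, Y, Z} ⊓ m = ⊥)
    (hm : ∀ x ∈ span K {X, Y, Z}, ∀ y ∈ m, ⁅x, y⁆ ∈ m) :
    ∃ a : K, m = span K {V1 + a • Z, V2 + a • Y, V3 - a • X} := by
  obtain ⟨a, hle⟩ := E.exists_span_le_of_lie_mem hsup (disjoint_iff.mpr hinf) hm
  refine ⟨a, (eq_of_le_of_inf_le_of_sup_le (z := span K {X, Y, Z}) hle ?_ ?_).symm⟩
  · rw [inf_comm, hinf]
    exact bot_le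
  · rw [sup_comm (span K {V1 + a • Z, V2 + a • Y, V3 - a • X}), E.sup_span_eq_top]
    exact le_top

end IsEuclideanMotionBasis

end EuclideanMotion

/-- in the 6-dimensional real Lie algebra `g ≅ so₃(ℝ) ⋉ ℝ³` with
basis `X, Y, Z, V₁, V₂, V₃` and the given structure constants, with
`h = span{X, Y, Z}` and `m_a = span{V₁ + aZ, V₂ + aY, V₃ − aX}`:
(1) every complement `m` of `h` with `[h, m] ⊆ m` equals `m_a` for some `a`;
(2) each `m_a` is such a complement, and `m_a` generates `g` as a Lie algebra
iff `a ≠ 0`. -/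
theorem stmt19 (L : Type*) [LieRing L] [LieAlgebra ℝ L]
    (X Y Z V1 V2 V3 : L)
    (hindep : LinearIndependent ℝ ![X, Y, Z, V1, V2, V3])
    (hspan : Submodule.span ℝ {X, Y, Z, V1, V2, V3} = (⊤ : Submodule ℝ L))
    (hXY : ⁅X, Y⁆ = Z) (hZX : ⁅Z, X⁆ = Y) (hYZ : ⁅Y, Z⁆ = X)
    (hXV1 : ⁅X, V1⁆ = -V2) (hZV3 : ⁅Z, V3⁆ = -V2)
    (hXV2 : ⁅X, V2⁆ = V1) (hYV3 : ⁅Y, V3⁆ = V1)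
    (hZV2 : ⁅Z, V2⁆ = V3) (hYV1 : ⁅Y, V1⁆ = -V3)
    (hXV3 : ⁅X, V3⁆ = 0) (hYV2 : ⁅Y, V2⁆ = 0) (hZV1 : ⁅Z, V1⁆ = 0)
    (hV12 : ⁅V1, V2⁆ = 0) (hV13 : ⁅V1, V3⁆ = 0) (hV23 : ⁅V2, V3⁆ = 0) :
    (∀ m : Submodule ℝ L,
      Submodule.span ℝ {X, Y, Z} ⊔ m = ⊤ →
      Submodule.span ℝ {X, Y, Z} ⊓ m = ⊥ →
      (∀ x ∈ Submodule.span ℝ {X, Y, Z}, ∀ y ∈ m, ⁅x, y⁆ ∈ m) →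
      ∃ a : ℝ, m = Submodule.span ℝ {V1 + a • Z, V2 + a • Y, V3 - a • X}) ∧
    (∀ a : ℝ,
      Submodule.span ℝ {X, Y, Z} ⊔
        Submodule.span ℝ {V1 + a • Z, V2 + a • Y, V3 - a • X} = ⊤ ∧
      Submodule.span ℝ {X, Y, Z} ⊓
        Submodule.span ℝ {V1 + a • Z, V2 + a • Y, V3 - a • X} = ⊥ ∧
      (∀ x ∈ Submodule.span ℝ {X, Y, Z},
        ∀ y ∈ Submodule.span ℝ {V1 + a • Z, V2 + a • Y, V3 - a • X},
        ⁅x, y⁆ ∈ Submodule.span ℝ {V1 + a • Z, V2 + a • Y, V3 - a • X}) ∧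
      ((LieSubalgebra.lieSpan ℝ L
        ({V1 + a • Z, V2 + a • Y, V3 - a • X} : Set L)).toSubmodule = ⊤ ↔
        a ≠ 0)) := by
  have E : IsEuclideanMotionBasis ℝ X Y Z V1 V2 V3 :=
    ⟨hindep, hspan, hXY, hYZ, hZX, hXV1, hXV2, hXV3, hYV1, hYV2, hYV3, hZV1, hZV2, hZV3,
      hV12, hV13, hV23⟩
  exact ⟨fun _ hsup hinf hm ↦ E.exists_eq_span_of_lie_mem hsup hinf hm,
    fun a ↦ ⟨E.sup_span_eq_top a, E.inf_span_eq_bot a, fun _ hx _ hy ↦ E.lie_mem_span a hx hy,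
      E.lieSpan_eq_top_iff a⟩⟩
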